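/- arXiv:1506.05307 — 4 statements merged into one kernel-verified Lean document; each statement's English description precedes it below -/
import Mathlib

section
/- Let f ∈ ℤ_p[[w]] be a nonzero power series with Weierstrass factorization f = p^μ · F(w) · u(w), where F is a distinguished (monic, degree λ, non-unit-coefficients divisible by p) polynomial and u a unit. Assume every zero of f in the open unit disc of ℂ_p has p-adic valuation at least r > 0. Then for every z ∈ ℂ_p with 0 < v_p(z) < r, one has v_p(f(z)) = μ + λ·v_p(z). -/
/-!
Evaluating the Weierstrass factorization at `z` gives `f(z) = p^μ F(z) u(z)`. On the open unit
disc `‖u(z)‖ = 1`, because the constant term of `u` is a unit and dominates the tail. The roots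
of the distinguished polynomial `F` lie in the open unit disc, so they are zeros of `f` and have
valuation at least `r > v(z)`; hence every factor `z - w` of `F(z)` has norm `‖z‖`, and
`‖f(z)‖ = p^(-μ) ‖z‖^λ`.
-/

open PowerSeries Polynomial

namespace PowerSeries

variable {R K : Type*} [CommSemiring R] [NormedField K]

/-- Meaningful when the series converges, e.g. for `‖φ a‖ ≤ 1` and `‖z‖ < 1`; otherwise `tsum`
returns `0`. -/
noncomputable def tsumEval₂ (φ : R →+* K) (z : K) (g : R⟦X⟧) : K :=
  ∑' n, φ (coeff n g) * z ^ n

theorem tsumEval₂_C (φ : R →+* K) (z : K) (a : R) : tsumEval₂ φ z (C a) = φ a := by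
  rw [tsumEval₂, tsum_eq_single 0 fun n hn => by rw [coeff_C, if_neg hn, map_zero, zero_mul],
    coeff_zero_C, pow_zero, mul_one]

theorem tsumEval₂_coe_polynomial (φ : R →+* K) (z : K) (P : R[X]) :
    tsumEval₂ φ z (P : R⟦X⟧) = (P.map φ).eval z := by
  rw [tsumEval₂, tsum_eq_sum (s := Finset.range (P.natDegree + 1)), eval_map,
    eval₂_eq_sum_range]
  · simp only [Polynomial.coeff_coe]
  · intro n hn
    rw [Finset.mem_range, not_lt] at hn
    rw [Polynomial.coeff_coe, Polynomial.coeff_eq_zero_of_natDegree_lt hn, map_zero, zero_mul]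

variable {φ : R →+* K} {z : K}

theorem summable_norm_tsumEval₂ (hφ : ∀ a, ‖φ a‖ ≤ 1) (hz : ‖z‖ < 1) (g : R⟦X⟧) :
    Summable fun n => ‖φ (coeff n g) * z ^ n‖ := by
  refine (summable_geometric_of_lt_one (norm_nonneg z) hz).of_nonneg_of_le
    (fun n => norm_nonneg _) fun n => ?_
  rw [norm_mul, norm_pow]
  exact mul_le_of_le_one_left (by positivity) (hφ _)

variable [CompleteSpace K]

theorem tsumEval₂_mul (hφ : ∀ a, ‖φ a‖ ≤ 1) (hz : ‖z‖ < 1) (g h : R⟦X⟧) :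
    tsumEval₂ φ z (g * h) = tsumEval₂ φ z g * tsumEval₂ φ z h := by
  rw [tsumEval₂, tsumEval₂, tsumEval₂, tsum_mul_tsum_eq_tsum_sum_antidiagonal_of_summable_norm
    (summable_norm_tsumEval₂ hφ hz g) (summable_norm_tsumEval₂ hφ hz h)]
  refine tsum_congr fun n => ?_
  rw [coeff_mul, map_sum, Finset.sum_mul]
  refine Finset.sum_congr rfl fun kl hkl => ?_
  rw [Finset.HasAntidiagonal.mem_antidiagonal] at hkl
  rw [map_mul, ← hkl, pow_add]
  ring

theorem norm_tsumEval₂_eq_one [IsUltrametricDist K] (hφ : ∀ a, ‖φ a‖ ≤ 1) (hz : ‖z‖ < 1)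
    {g : R⟦X⟧} (hg : ‖φ (constantCoeff g)‖ = 1) : ‖tsumEval₂ φ z g‖ = 1 := by
  set t : ℕ → K := fun n => φ (coeff n g) * z ^ n
  have ht0 : ‖t 0‖ = 1 := by simpa [t] using hg
  have htail : ‖∑' n, t (n + 1)‖ < 1 := by
    refine lt_of_le_of_lt (IsUltrametricDist.norm_tsum_le_of_forall_le_of_nonneg
      (norm_nonneg z) fun n => ?_) hz
    rw [norm_mul, norm_pow]
    exact (mul_le_of_le_one_left (by positivity) (hφ _)).trans
      (pow_le_of_le_one (norm_nonneg z) hz.le n.succ_ne_zero)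
  rw [tsumEval₂, ((summable_norm_tsumEval₂ hφ hz g).of_norm).tsum_eq_zero_add,
    IsUltrametricDist.norm_add_eq_max_of_norm_ne_norm (ht0 ▸ htail.ne'), ht0,
    max_eq_left htail.le]

end PowerSeries

namespace Polynomial

variable {K : Type*} [NormedField K] [IsUltrametricDist K]

theorem norm_lt_one_of_isRoot_of_monic {P : K[X]} (hm : P.Monic)
    (hP : ∀ i < P.natDegree, ‖P.coeff i‖ < 1) {w : K} (hw : P.IsRoot w) : ‖w‖ < 1 := by
  by_contra! hw1
  have hpow : w ^ P.natDegree = -∑ i ∈ Finset.range P.natDegree, P.coeff i * w ^ i := by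
    have := hw.eq_zero
    rw [hm.as_sum] at this
    simpa [eq_neg_iff_add_eq_zero, eval_finsetSum] using this
  rcases (Finset.range P.natDegree).eq_empty_or_nonempty with h | h
  · rw [Finset.range_eq_empty_iff] at h
    simp [h] at hpow
  obtain ⟨i, hi, hle⟩ := IsUltrametricDist.exists_norm_finsetSum_le_of_nonempty h
    fun i => P.coeff i * w ^ i
  rw [Finset.mem_range] at hi
  have hcontra : ‖w‖ ^ P.natDegree < ‖w‖ ^ P.natDegree := calc
    ‖w‖ ^ P.natDegree ≤ ‖P.coeff i‖ * ‖w‖ ^ i := by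
      rw [← norm_pow, hpow, norm_neg, ← norm_pow, ← norm_mul]; exact hle
    _ ≤ ‖P.coeff i‖ * ‖w‖ ^ P.natDegree := by gcongr
    _ < 1 * ‖w‖ ^ P.natDegree :=
      mul_lt_mul_of_pos_right (hP i hi) (pow_pos (one_pos.trans_le hw1) _)
    _ = ‖w‖ ^ P.natDegree := one_mul _
  exact hcontra.false

theorem norm_eval_eq_pow_natDegree {P : K[X]} (hs : P.Splits) (hm : P.Monic) {z : K}
    (hroots : ∀ w ∈ P.roots, ‖w‖ < ‖z‖) : ‖P.eval z‖ = ‖z‖ ^ P.natDegree := by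
  rw [hs.eval_eq_prod_roots_of_monic hm, hs.natDegree_eq_card_roots, ← normHom_apply,
    map_multiset_prod, Multiset.map_map]
  have hdist : ∀ w ∈ P.roots, ‖z - w‖ = ‖z‖ := fun w hw => by
    have hne : ‖z‖ ≠ ‖-w‖ := by rw [norm_neg]; exact (hroots w hw).ne'
    rw [sub_eq_add_neg, IsUltrametricDist.norm_add_eq_max_of_norm_ne_norm hne, norm_neg,
      max_eq_left (hroots w hw).le]
  rw [Multiset.map_congr (f := normHom ∘ (z - ·)) (g := fun _ => ‖z‖) rfl hdist,
    Multiset.map_const', Multiset.prod_replicate]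

end Polynomial

namespace PadicInt

variable {p : ℕ} [Fact p.Prime] {K : Type*} [NormedField K] [IsUltrametricDist K]
  {φ : ℤ_[p] →+* K}

theorem norm_lt_one_of_isRoot_map_of_distinguished (hφ : ∀ a, ‖φ a‖ = ‖a‖) {F : ℤ_[p][X]}
    (hm : F.Monic) (hF : ∀ i < F.natDegree, (p : ℤ_[p]) ∣ F.coeff i) {w : K}
    (hw : (F.map φ).IsRoot w) : ‖w‖ < 1 := by
  refine norm_lt_one_of_isRoot_of_monic (hm.map φ) (fun i hi => ?_) hw
  rw [hm.natDegree_map] at hi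
  rw [Polynomial.coeff_map, hφ, norm_lt_one_iff_dvd]
  exact hF i hi

theorem norm_tsumEval₂_unit [CompleteSpace K] (hφ : ∀ a, ‖φ a‖ = ‖a‖) {z : K} (hz : ‖z‖ < 1)
    (u : ℤ_[p]⟦X⟧ˣ) : ‖tsumEval₂ φ z u‖ = 1 := by
  refine norm_tsumEval₂_eq_one (fun a => (hφ a).trans_le (norm_le_one a)) hz ?_
  rw [hφ, ← isUnit_iff]
  exact isUnit_constantCoeff _ u.isUnit

end PadicInt

open PadicInt

theorem valuation_iwasawa_function_eval_general
    (p : ℕ) [Fact p.Prime]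
    (K : Type*) [NontriviallyNormedField K] [CompleteSpace K] [IsAlgClosed K]
    [Algebra ℚ_[p] K]
    (hnorm : ∀ x : ℚ_[p], ‖algebraMap ℚ_[p] K x‖ = ‖x‖)
    (hna : ∀ x y : K, ‖x + y‖ ≤ max ‖x‖ ‖y‖)
    (f : PowerSeries ℤ_[p])
    (μ lam : ℕ) (F : Polynomial ℤ_[p]) (u : (PowerSeries ℤ_[p])ˣ)
    (hF_monic : F.Monic) (hF_deg : F.natDegree = lam)
    (hF_dist : ∀ i < lam, (p : ℤ_[p]) ∣ F.coeff i)
    (hfact : f = (p : PowerSeries ℤ_[p]) ^ μ *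
      (PowerSeries.mk fun n => F.coeff n) * (u : PowerSeries ℤ_[p]))
    (r : ℝ)
    (hroots : ∀ z : K, ‖z‖ < 1 →
      (∑' n : ℕ, algebraMap ℚ_[p] K ((PowerSeries.coeff n f : ℤ_[p]) : ℚ_[p]) * z ^ n)
        = 0 → r ≤ -Real.logb p ‖z‖) :
    ∀ z : K, 0 < -Real.logb p ‖z‖ → -Real.logb p ‖z‖ < r →
      -Real.logb p
          ‖∑' n : ℕ, algebraMap ℚ_[p] K ((PowerSeries.coeff n f : ℤ_[p]) : ℚ_[p]) * z ^ n‖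
        = (μ : ℝ) + (lam : ℝ) * (-Real.logb p ‖z‖) := by
  have : IsUltrametricDist K := .isUltrametricDist_of_forall_norm_add_le_max_norm hna
  have hp1 : (1 : ℝ) < p := mod_cast (Fact.out : p.Prime).one_lt
  let φ : ℤ_[p] →+* K := (algebraMap ℚ_[p] K).comp Coe.ringHom
  have hφ (a : ℤ_[p]) : ‖φ a‖ = ‖a‖ := hnorm a
  have hφ1 (a : ℤ_[p]) : ‖φ a‖ ≤ 1 := (hφ a).trans_le (norm_le_one a)
  have hf_eval {z : K} (hz : ‖z‖ < 1) :
      tsumEval₂ φ z f = φ ((p : ℤ_[p]) ^ μ) * (F.map φ).eval z * tsumEval₂ φ z u := by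
    rw [hfact, ← coe_def, ← map_natCast (PowerSeries.C (R := ℤ_[p])), ← map_pow,
      tsumEval₂_mul hφ1 hz, tsumEval₂_mul hφ1 hz, tsumEval₂_C, tsumEval₂_coe_polynomial]
  intro z hz_pos hz_lt
  change -Real.logb p ‖tsumEval₂ φ z f‖ = _
  have hz0 : 0 < ‖z‖ := (norm_nonneg z).lt_of_ne fun h => by simp [← h] at hz_pos
  have hz1 : ‖z‖ < 1 := (Real.logb_neg_iff hp1 hz0).1 (neg_pos.1 hz_pos)
  have hroots_lt : ∀ w ∈ (F.map φ).roots, ‖w‖ < ‖z‖ := fun w hw => by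
    have hFw := isRoot_of_mem_roots hw
    have hw1 := norm_lt_one_of_isRoot_map_of_distinguished hφ hF_monic (hF_deg ▸ hF_dist) hFw
    have hrw : r ≤ -Real.logb p ‖w‖ := hroots w hw1 <| by
      change tsumEval₂ φ w f = 0
      rw [hf_eval hw1, hFw.eq_zero, mul_zero, zero_mul]
    by_contra! h
    linarith [Real.logb_le_logb_of_le hp1 hz0 h]
  rw [hf_eval hz1, norm_mul, norm_mul, norm_tsumEval₂_unit hφ hz1, mul_one, hφ, norm_pow, norm_p,
    norm_eval_eq_pow_natDegree (IsAlgClosed.splits _) (hF_monic.map φ) hroots_lt,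
    hF_monic.natDegree_map, hF_deg, Real.logb_mul (by positivity) (by positivity),
    Real.logb_pow, Real.logb_pow, Real.logb_inv, Real.logb_self_eq_one hp1]
  ring

/-- Valuations of values of Iwasawa functions.  Let `K` be a complete algebraically closed
nonarchimedean normed field extending `ℚ_p` isometrically (a model of `ℂ_p`), and write
`v z = -log_p ‖z‖` for its `p`-adic valuation.  Let `f ∈ ℤ_p[[w]]` be nonzero with
Weierstrass factorization `f = p^μ · F · u`, where `F` is a distinguished polynomial of
degree `λ` (monic, lower coefficients divisible by `p`) and `u` a unit of `ℤ_p[[w]]`.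
If every zero of `f` in the open unit disc of `K` has valuation at least `r > 0`, then for
every `z` with `0 < v z < r` one has `v (f z) = μ + λ · v z`. -/
theorem valuation_iwasawa_function_eval
    (p : ℕ) [Fact p.Prime]
    (K : Type*) [NontriviallyNormedField K] [CompleteSpace K] [IsAlgClosed K]
    [Algebra ℚ_[p] K]
    (hnorm : ∀ x : ℚ_[p], ‖algebraMap ℚ_[p] K x‖ = ‖x‖)
    (hna : ∀ x y : K, ‖x + y‖ ≤ max ‖x‖ ‖y‖)
    (f : PowerSeries ℤ_[p]) (hf : f ≠ 0)
    (μ lam : ℕ) (F : Polynomial ℤ_[p]) (u : (PowerSeries ℤ_[p])ˣ)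
    (hF_monic : F.Monic) (hF_deg : F.natDegree = lam)
    (hF_dist : ∀ i < lam, (p : ℤ_[p]) ∣ F.coeff i)
    (hfact : f = (p : PowerSeries ℤ_[p]) ^ μ *
      (PowerSeries.mk fun n => F.coeff n) * (u : PowerSeries ℤ_[p]))
    (r : ℝ) (hr : 0 < r)
    (hroots : ∀ z : K, ‖z‖ < 1 →
      (∑' n : ℕ, algebraMap ℚ_[p] K ((PowerSeries.coeff n f : ℤ_[p]) : ℚ_[p]) * z ^ n)
        = 0 → r ≤ -Real.logb p ‖z‖) :
    ∀ z : K, 0 < -Real.logb p ‖z‖ → -Real.logb p ‖z‖ < r →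
      -Real.logb p
          ‖∑' n : ℕ, algebraMap ℚ_[p] K ((PowerSeries.coeff n f : ℤ_[p]) : ℚ_[p]) * z ^ n‖
        = (μ : ℝ) + (lam : ℝ) * (-Real.logb p ‖z‖) :=
  valuation_iwasawa_function_eval_general p K hnorm hna f μ lam F u hF_monic hF_deg hF_dist hfact r
    hroots
end

section
/- Let f ∈ ℤ_p[[w]] be nonzero with μ(f) = 0, and let z ∈ ℂ_p with 0 < v_p(z) and v_p(z) strictly less than the valuation of every root of f in the open unit disc. Then f(z) ≠ 0 and v_p(f(z)) = λ(f) · v_p(z), where λ(f) is the Weierstrass degree of f. -/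
/-!
Write `f = F · u` with `F` distinguished and `u` a unit of `ℤ_p⟦X⟧`. On the open unit disc
`u(w) = u(0) + O(‖w‖)` with `‖u(0)‖ = 1`, so `‖u(w)‖ = 1` and `‖f(w)‖ = ‖F(w)‖`; in particular the
roots of `F` are zeros of `f`. They lie in the open unit disc, because every non-leading
coefficient of `F` has norm `< 1`, so by hypothesis they are all strictly smaller than `z` in norm.
Splitting `F = ∏ (X - r)` over the algebraically closed field, each factor has `‖z - r‖ = ‖z‖` by
the ultrametric inequality, whence `‖f(z)‖ = ‖z‖ ^ λ`.
-/

open PowerSeries Polynomial IsUltrametricDist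

section Evaluation

variable {K : Type*} [NormedField K]

/-- `∑ aₙ wⁿ`, with the junk value `0` where the series diverges. -/
noncomputable def tsumEval (g : K⟦X⟧) (w : K) : K :=
  ∑' n, PowerSeries.coeff n g * w ^ n

variable {g h : K⟦X⟧} {w : K}

lemma summable_norm_coeff_mul_pow (hg : ∀ n, ‖PowerSeries.coeff n g‖ ≤ 1) (hw : ‖w‖ < 1) :
    Summable fun n ↦ ‖PowerSeries.coeff n g * w ^ n‖ := by
  refine .of_nonneg_of_le (fun _ ↦ norm_nonneg _) (fun n ↦ ?_)
    (summable_geometric_of_lt_one (norm_nonneg w) hw)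
  rw [norm_mul, norm_pow]
  exact mul_le_of_le_one_left (by positivity) (hg n)

lemma tsumEval_mul [CompleteSpace K] (hg : ∀ n, ‖PowerSeries.coeff n g‖ ≤ 1)
    (hh : ∀ n, ‖PowerSeries.coeff n h‖ ≤ 1) (hw : ‖w‖ < 1) :
    tsumEval (g * h) w = tsumEval g w * tsumEval h w := by
  rw [tsumEval, tsumEval, tsumEval, tsum_mul_tsum_eq_tsum_sum_antidiagonal_of_summable_norm
    (f := fun n ↦ PowerSeries.coeff n g * w ^ n) (g := fun n ↦ PowerSeries.coeff n h * w ^ n)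
    (summable_norm_coeff_mul_pow hg hw) (summable_norm_coeff_mul_pow hh hw)]
  refine tsum_congr fun n ↦ ?_
  rw [PowerSeries.coeff_mul, Finset.sum_mul]
  refine Finset.sum_congr rfl fun ⟨k, l⟩ hkl ↦ ?_
  rw [← Finset.HasAntidiagonal.mem_antidiagonal.mp hkl, pow_add, mul_mul_mul_comm]

lemma tsumEval_coe (P : K[X]) (w : K) : tsumEval (P : K⟦X⟧) w = P.eval w := by
  rw [tsumEval, eval_eq_sum_range, tsum_eq_sum (s := Finset.range (P.natDegree + 1)) fun n hn ↦ ?_]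
  · simp only [Polynomial.coeff_coe]
  · rw [Polynomial.coeff_coe, coeff_eq_zero_of_natDegree_lt (by simpa [Nat.lt_succ_iff] using hn),
      zero_mul]

lemma norm_tsumEval_eq_one [CompleteSpace K] [IsUltrametricDist K]
    (hg : ∀ n, ‖PowerSeries.coeff n g‖ ≤ 1) (hg₀ : ‖constantCoeff g‖ = 1) (hw : ‖w‖ < 1) :
    ‖tsumEval g w‖ = 1 := by
  have htail : ‖∑' n, PowerSeries.coeff (n + 1) g * w ^ (n + 1)‖ < 1 := by
    refine lt_of_le_of_lt (norm_tsum_le_of_forall_le_of_nonneg (norm_nonneg w) fun n ↦ ?_) hw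
    rw [norm_mul, norm_pow]
    exact (mul_le_of_le_one_left (by positivity) (hg _)).trans
      (pow_le_of_le_one (norm_nonneg w) hw.le n.succ_ne_zero)
  rw [tsumEval, (summable_norm_coeff_mul_pow hg hw).of_norm.tsum_eq_zero_add, pow_zero, mul_one,
    coeff_zero_eq_constantCoeff_apply,
    norm_add_eq_max_of_norm_ne_norm (by rw [hg₀]; exact htail.ne'), hg₀, max_eq_left htail.le]

end Evaluation

section UltrametricPolynomial

variable {K : Type*} [NormedField K] [IsUltrametricDist K] {P : K[X]}

lemma Polynomial.norm_lt_one_of_isRoot (hP : P.Monic)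
    (hcoeff : ∀ i < P.natDegree, ‖P.coeff i‖ < 1) {r : K} (hr : P.IsRoot r) : ‖r‖ < 1 := by
  by_contra! h1
  have hdeg : P.natDegree ≠ 0 := fun h ↦ by simp [hP.natDegree_eq_zero.mp h] at hr
  have hpow : r ^ P.natDegree = -∑ i ∈ Finset.range P.natDegree, P.coeff i * r ^ i := by
    have h := hr.eq_zero
    rw [eval_eq_sum_range, Finset.sum_range_succ, hP.coeff_natDegree, one_mul] at h
    linear_combination h
  obtain ⟨i, hi, hle⟩ := exists_norm_finsetSum_le (Finset.range P.natDegree)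
    fun i ↦ P.coeff i * r ^ i
  replace hi := Finset.mem_range.mp (hi (Finset.nonempty_range_iff.mpr hdeg))
  have := calc ‖r‖ ^ P.natDegree
      _ = ‖∑ i ∈ Finset.range P.natDegree, P.coeff i * r ^ i‖ := by rw [← norm_pow, hpow, norm_neg]
      _ ≤ ‖P.coeff i * r ^ i‖ := hle
      _ < ‖r‖ ^ i := by
        rw [norm_mul, norm_pow]
        exact mul_lt_of_lt_one_left (pow_pos (one_pos.trans_le h1) i) (hcoeff i hi)
      _ ≤ ‖r‖ ^ P.natDegree := pow_le_pow_right₀ h1 hi.le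
  exact lt_irrefl _ this

lemma Polynomial.norm_eval_eq_pow_natDegree_of_norm_roots_lt (hP : P.Monic) (hsplit : P.Splits)
    {z : K} (hroots : ∀ r ∈ P.roots, ‖r‖ < ‖z‖) : ‖P.eval z‖ = ‖z‖ ^ P.natDegree := by
  have hfactor (r : K) (hr : r ∈ P.roots) : ‖z - r‖ = ‖z‖ := by
    rw [sub_eq_add_neg, norm_add_eq_max_of_norm_ne_norm, norm_neg, max_eq_left (hroots r hr).le]
    rw [norm_neg]
    exact (hroots r hr).ne'
  rw [hsplit.eval_eq_prod_roots_of_monic hP, hsplit.natDegree_eq_card_roots,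
    ← Multiset.prod_replicate, ← Multiset.map_const', ← Multiset.map_congr rfl hfactor]
  exact map_multiset_prod (normHom : K →*₀ ℝ) _ |>.trans (by rw [Multiset.map_map]; rfl)

end UltrametricPolynomial

section PadicCoefficients

variable {p : ℕ} [Fact p.Prime] {K : Type*} [NormedField K] {φ : ℤ_[p] →+* K}

lemma norm_coeff_map_le_one (hφ : ∀ c, ‖φ c‖ = ‖c‖) (g : ℤ_[p]⟦X⟧) (n : ℕ) :
    ‖PowerSeries.coeff n (g.map φ)‖ ≤ 1 := by
  rw [PowerSeries.coeff_map, hφ]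
  exact PadicInt.norm_le_one _

lemma norm_tsumEval_map_mul_unit [CompleteSpace K] [IsUltrametricDist K]
    (hφ : ∀ c, ‖φ c‖ = ‖c‖) (g : ℤ_[p]⟦X⟧) (u : ℤ_[p]⟦X⟧ˣ) {w : K} (hw : ‖w‖ < 1) :
    ‖tsumEval ((g * u).map φ) w‖ = ‖tsumEval (g.map φ) w‖ := by
  have hu : ‖constantCoeff ((u : ℤ_[p]⟦X⟧).map φ)‖ = 1 := by
    rw [← coeff_zero_eq_constantCoeff_apply, PowerSeries.coeff_map, hφ,
      coeff_zero_eq_constantCoeff_apply, ← PadicInt.isUnit_iff]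
    exact u.isUnit.map PowerSeries.constantCoeff
  rw [map_mul, tsumEval_mul (norm_coeff_map_le_one hφ g) (norm_coeff_map_le_one hφ u) hw, norm_mul,
    norm_tsumEval_eq_one (norm_coeff_map_le_one hφ u) hu hw, mul_one]

lemma norm_lt_one_of_isRoot_map [IsUltrametricDist K] (hφ : ∀ c, ‖φ c‖ = ‖c‖) {F : ℤ_[p][X]}
    (hF : F.Monic) (hdist : ∀ i < F.natDegree, (p : ℤ_[p]) ∣ F.coeff i) {r : K}
    (hr : (F.map φ).IsRoot r) : ‖r‖ < 1 := by
  refine norm_lt_one_of_isRoot (hF.map φ) (fun i hi ↦ ?_) hr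
  rw [hF.natDegree_map] at hi
  rw [Polynomial.coeff_map, hφ, PadicInt.norm_lt_one_iff_dvd]
  exact hdist i hi

end PadicCoefficients

lemma Real.lt_of_neg_logb_lt_neg_logb {b x y : ℝ} (hb : 1 < b) (hx : 0 ≤ x) (hy : 0 < y)
    (h : -logb b y < -logb b x) : x < y := by
  rcases hx.eq_or_lt with rfl | hx
  · exact hy
  · exact (logb_lt_logb_iff hb hx hy).mp (neg_lt_neg_iff.mp h)

theorem eval_ne_zero_and_valuation_eq_lambda_mul_general
    (p : ℕ) [Fact p.Prime]
    (K : Type*) [NontriviallyNormedField K] [CompleteSpace K] [IsAlgClosed K]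
    [Algebra ℚ_[p] K]
    (hnorm : ∀ x : ℚ_[p], ‖algebraMap ℚ_[p] K x‖ = ‖x‖)
    (hna : ∀ x y : K, ‖x + y‖ ≤ max ‖x‖ ‖y‖)
    (f : PowerSeries ℤ_[p])
    (lam : ℕ) (F : Polynomial ℤ_[p]) (u : (PowerSeries ℤ_[p])ˣ)
    (hF_monic : F.Monic) (hF_deg : F.natDegree = lam)
    (hF_dist : ∀ i < lam, (p : ℤ_[p]) ∣ F.coeff i)
    (hfact : f = (PowerSeries.mk fun n => F.coeff n) * (u : PowerSeries ℤ_[p]))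
    (z : K) (hz : 0 < -Real.logb p ‖z‖)
    (hroots : ∀ w : K, ‖w‖ < 1 →
      (∑' n : ℕ, algebraMap ℚ_[p] K ((PowerSeries.coeff (R := ℤ_[p]) n f : ℤ_[p]) : ℚ_[p]) * w ^ n)
        = 0 → -Real.logb p ‖z‖ < -Real.logb p ‖w‖) :
    (∑' n : ℕ, algebraMap ℚ_[p] K ((PowerSeries.coeff (R := ℤ_[p]) n f : ℤ_[p]) : ℚ_[p]) * z ^ n) ≠ 0
      ∧ -Real.logb p
          ‖∑' n : ℕ, algebraMap ℚ_[p] K ((PowerSeries.coeff (R := ℤ_[p]) n f : ℤ_[p]) : ℚ_[p]) * z ^ n‖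
        = (lam : ℝ) * (-Real.logb p ‖z‖) := by
  have : IsUltrametricDist K := isUltrametricDist_of_isNonarchimedean_norm hna
  subst hF_deg
  have hp : (1 : ℝ) < p := mod_cast (Fact.out : p.Prime).one_lt
  set φ : ℤ_[p] →+* K := (algebraMap ℚ_[p] K).comp PadicInt.Coe.ringHom
  have hφ (c : ℤ_[p]) : ‖φ c‖ = ‖c‖ := hnorm c
  change ∀ w : K, ‖w‖ < 1 → tsumEval (f.map φ) w = 0 → _ at hroots
  change tsumEval (f.map φ) z ≠ 0 ∧ -Real.logb p ‖tsumEval (f.map φ) z‖ = _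
  have hfF (w : K) (hw : ‖w‖ < 1) : ‖tsumEval (f.map φ) w‖ = ‖(F.map φ).eval w‖ := by
    rw [show f = (F : ℤ_[p]⟦X⟧) * u from hfact, norm_tsumEval_map_mul_unit hφ _ _ hw,
      ← polynomial_map_coe, tsumEval_coe]
  have hz0 : 0 < ‖z‖ := (norm_nonneg z).lt_of_ne fun h ↦ by simp [← h] at hz
  have hz1 : ‖z‖ < 1 := (Real.logb_neg_iff hp hz0).mp (neg_pos.mp hz)
  have hroots_lt (r : K) (hr : r ∈ (F.map φ).roots) : ‖r‖ < ‖z‖ := by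
    have hr1 := norm_lt_one_of_isRoot_map hφ hF_monic hF_dist (isRoot_of_mem_roots hr)
    refine Real.lt_of_neg_logb_lt_neg_logb hp (norm_nonneg r) hz0 (hroots r hr1 ?_)
    rw [← norm_eq_zero, hfF r hr1, (isRoot_of_mem_roots hr).eq_zero, norm_zero]
  have hfz : ‖tsumEval (f.map φ) z‖ = ‖z‖ ^ F.natDegree := by
    rw [hfF z hz1, ← hF_monic.natDegree_map φ,
      norm_eval_eq_pow_natDegree_of_norm_roots_lt (hF_monic.map φ) (IsAlgClosed.splits _) hroots_lt]
  refine ⟨?_, ?_⟩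
  · rw [← norm_ne_zero_iff, hfz]
    positivity
  · rw [hfz, Real.logb_pow]
    ring

/-- Let `K` be a complete algebraically closed nonarchimedean normed field extending `ℚ_p`
isometrically (a model of `ℂ_p`), with valuation `v z = -log_p ‖z‖`.  Let `f ∈ ℤ_p[[w]]` be
nonzero with `μ(f) = 0`, i.e. `f = F · u` with `F` a distinguished polynomial of degree
`λ(f) = lam` (the Weierstrass degree) and `u` a unit.  If `z` satisfies `0 < v z` and
`v z` is strictly less than the valuation of every root of `f` in the open unit disc, then
`f(z) ≠ 0` and `v (f z) = λ(f) · v z`. -/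
theorem eval_ne_zero_and_valuation_eq_lambda_mul
    (p : ℕ) [Fact p.Prime]
    (K : Type*) [NontriviallyNormedField K] [CompleteSpace K] [IsAlgClosed K]
    [Algebra ℚ_[p] K]
    (hnorm : ∀ x : ℚ_[p], ‖algebraMap ℚ_[p] K x‖ = ‖x‖)
    (hna : ∀ x y : K, ‖x + y‖ ≤ max ‖x‖ ‖y‖)
    (f : PowerSeries ℤ_[p]) (hf : f ≠ 0)
    (lam : ℕ) (F : Polynomial ℤ_[p]) (u : (PowerSeries ℤ_[p])ˣ)
    (hF_monic : F.Monic) (hF_deg : F.natDegree = lam)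
    (hF_dist : ∀ i < lam, (p : ℤ_[p]) ∣ F.coeff i)
    (hfact : f = (PowerSeries.mk fun n => F.coeff n) * (u : PowerSeries ℤ_[p]))
    (z : K) (hz : 0 < -Real.logb p ‖z‖)
    (hroots : ∀ w : K, ‖w‖ < 1 →
      (∑' n : ℕ, algebraMap ℚ_[p] K ((PowerSeries.coeff (R := ℤ_[p]) n f : ℤ_[p]) : ℚ_[p]) * w ^ n)
        = 0 → -Real.logb p ‖z‖ < -Real.logb p ‖w‖) :
    (∑' n : ℕ, algebraMap ℚ_[p] K ((PowerSeries.coeff (R := ℤ_[p]) n f : ℤ_[p]) : ℚ_[p]) * z ^ n) ≠ 0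
      ∧ -Real.logb p
          ‖∑' n : ℕ, algebraMap ℚ_[p] K ((PowerSeries.coeff (R := ℤ_[p]) n f : ℤ_[p]) : ℚ_[p]) * z ^ n‖
        = (lam : ℝ) * (-Real.logb p ‖z‖) :=
  eval_ne_zero_and_valuation_eq_lambda_mul_general p K hnorm hna f lam F u hF_monic hF_deg hF_dist
    hfact z hz hroots
end

section
/- Let p be a prime and a_i ∈ ℤ_p[[w]] for i ≥ 0 with a_0 = 1, μ(a_{i_{k-1}}) = 0 and μ(a_i) = 0 for some indices i_{k-1} < i_k ≤ i. Suppose r' > 0 is such that all roots of a_{i_{k-1}}, a_{i_k}, a_i in the open unit disc have valuation ≥ r', and suppose that for all w_0 with 0 < v_p(w_0) < r' the inequality (v_p(a_{i_k}(w_0)) − v_p(a_{i_{k-1}}(w_0)))/(i_k − i_{k-1}) ≤ (v_p(a_i(w_0)) − v_p(a_{i_{k-1}}(w_0)))/(i − i_{k-1}) holds. Then μ(a_{i_k}) = 0. -/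
/-!
Suppose `p ∣ a i₁`. Pick `w` with `‖w‖ ^ N = p⁻¹`, i.e. `v(w) = 1/N`, for `N` larger than `1/r'`
and than the Weierstrass degrees `l₀, l₂` of `a i₀, a i₂`. Since `w` is so close to the boundary,
the term `cₗ wˡ` dominates every series `∑ cₙ wⁿ` with `p ∤ cₗ` and `p ∣ cₙ` for `n < l`, so
`v(a i₀(w)) = l₀/N < 1` and `v(a i₂(w)) = l₂/N < 1`, whereas `v(a i₁(w)) ≥ 1` as all coefficients of
`a i₁` are divisible by `p` (and `a i₁(w) ≠ 0` because `v(w) < r'`). Then the left slope exceeds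
the right one.
-/

open PowerSeries Real

namespace PowerSeries

variable {R : Type*} [Semiring R]

theorem C_dvd_iff_forall_dvd_coeff (r : R) (f : R⟦X⟧) : C r ∣ f ↔ ∀ n, r ∣ coeff n f := by
  constructor
  · rintro ⟨g, rfl⟩ n
    rw [coeff_C_mul]
    exact dvd_mul_right r _
  · intro h
    choose g hg using h
    exact ⟨mk g, by ext n; rw [coeff_C_mul, coeff_mk, hg n]⟩

theorem natCast_dvd_iff_forall_dvd_coeff (m : ℕ) (f : R⟦X⟧) :
    (m : R⟦X⟧) ∣ f ↔ ∀ n, (m : R) ∣ coeff n f := by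
  rw [← map_natCast (C (R := R)) m, C_dvd_iff_forall_dvd_coeff]

theorem exists_coeff_not_dvd_of_not_natCast_dvd {m : ℕ} {f : R⟦X⟧} (hf : ¬ (m : R⟦X⟧) ∣ f) :
    ∃ l, ¬ (m : R) ∣ coeff l f ∧ ∀ n < l, (m : R) ∣ coeff n f := by
  classical
  have hex : ∃ l, ¬ (m : R) ∣ coeff l f := by
    simpa [natCast_dvd_iff_forall_dvd_coeff] using hf
  exact ⟨Nat.find hex, Nat.find_spec hex, fun n hn => not_not.mp (Nat.find_min hex hn)⟩

end PowerSeries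

theorem PadicInt.norm_le_inv_of_dvd {p : ℕ} [Fact p.Prime] {x : ℤ_[p]} (h : (p : ℤ_[p]) ∣ x) :
    ‖x‖ ≤ (p : ℝ)⁻¹ := by
  obtain ⟨y, rfl⟩ := h
  rw [norm_mul, PadicInt.norm_p]
  exact mul_le_of_le_one_right (by positivity) (PadicInt.norm_le_one y)

theorem IsUltrametricDist.norm_tsum_eq_of_forall_ne_le {M ι : Type*} [NormedAddCommGroup M]
    [IsUltrametricDist M] {f : ι → M} (hf : Summable f) {i : ι} {C : ℝ} (hC₀ : 0 ≤ C)
    (hC : C < ‖f i‖) (h : ∀ j ≠ i, ‖f j‖ ≤ C) : ‖∑' j, f j‖ = ‖f i‖ := by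
  classical
  have hrest : ‖∑' j, if j = i then 0 else f j‖ ≤ C :=
    norm_tsum_le_of_forall_le_of_nonneg hC₀ fun j => by
      split_ifs with hj
      · simpa using hC₀
      · exact h j hj
  rw [hf.tsum_eq_add_tsum_ite i, norm_add_eq_max_of_norm_ne_norm (hrest.trans_lt hC).ne',
    max_eq_left (hrest.trans hC.le)]

section Evaluation

variable {p : ℕ} [Fact p.Prime] {K : Type*} [NormedField K] [Algebra ℚ_[p] K]

noncomputable def evalSeries (f : ℤ_[p]⟦X⟧) (w : K) : K :=
  ∑' n, algebraMap ℚ_[p] K ((coeff n f : ℤ_[p]) : ℚ_[p]) * w ^ n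

theorem norm_evalSeries_term (hnorm : ∀ x : ℚ_[p], ‖algebraMap ℚ_[p] K x‖ = ‖x‖)
    (f : ℤ_[p]⟦X⟧) (w : K) (n : ℕ) :
    ‖algebraMap ℚ_[p] K ((coeff n f : ℤ_[p]) : ℚ_[p]) * w ^ n‖ = ‖coeff n f‖ * ‖w‖ ^ n := by
  rw [norm_mul, norm_pow, hnorm, PadicInt.norm_def]

theorem summable_evalSeries [CompleteSpace K] (hnorm : ∀ x : ℚ_[p], ‖algebraMap ℚ_[p] K x‖ = ‖x‖)
    (f : ℤ_[p]⟦X⟧) {w : K} (hw : ‖w‖ < 1) :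
    Summable fun n => algebraMap ℚ_[p] K ((coeff n f : ℤ_[p]) : ℚ_[p]) * w ^ n :=
  .of_norm_bounded (summable_geometric_of_lt_one (norm_nonneg w) hw) fun n => by
    rw [norm_evalSeries_term hnorm]
    exact mul_le_of_le_one_left (by positivity) (PadicInt.norm_le_one _)

theorem norm_evalSeries_le_of_dvd [IsUltrametricDist K]
    (hnorm : ∀ x : ℚ_[p], ‖algebraMap ℚ_[p] K x‖ = ‖x‖) {f : ℤ_[p]⟦X⟧}
    (hf : (p : ℤ_[p]⟦X⟧) ∣ f) {w : K} (hw : ‖w‖ ≤ 1) : ‖evalSeries f w‖ ≤ (p : ℝ)⁻¹ :=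
  IsUltrametricDist.norm_tsum_le_of_forall_le_of_nonneg (by positivity) fun n => by
    rw [norm_evalSeries_term hnorm]
    exact (mul_le_of_le_one_right (norm_nonneg _) (pow_le_one₀ (norm_nonneg w) hw)).trans
      (PadicInt.norm_le_inv_of_dvd ((natCast_dvd_iff_forall_dvd_coeff p f).mp hf n))

/-- For `μ(f) = 0` and `λ(f) = l`, this is `v(f(w)) = λ(f) v(w)` in the range `l v(w) < 1`. -/
theorem norm_evalSeries_eq_pow [CompleteSpace K] [IsUltrametricDist K]
    (hnorm : ∀ x : ℚ_[p], ‖algebraMap ℚ_[p] K x‖ = ‖x‖) {f : ℤ_[p]⟦X⟧} {l : ℕ}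
    (hl : ¬ (p : ℤ_[p]) ∣ coeff l f) (hlt : ∀ n < l, (p : ℤ_[p]) ∣ coeff n f)
    {w : K} (hw : ‖w‖ < 1) (hwl : (p : ℝ)⁻¹ < ‖w‖ ^ l) : ‖evalSeries f w‖ = ‖w‖ ^ l := by
  have hunit : ‖coeff l f‖ = 1 :=
    le_antisymm (PadicInt.norm_le_one _) (not_lt.mp (mt (PadicInt.norm_lt_one_iff_dvd _).mp hl))
  have hterm := norm_evalSeries_term hnorm f w
  have hlead : ‖algebraMap ℚ_[p] K ((coeff l f : ℤ_[p]) : ℚ_[p]) * w ^ l‖ = ‖w‖ ^ l := by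
    rw [hterm, hunit, one_mul]
  rw [evalSeries, ← hlead]
  refine IsUltrametricDist.norm_tsum_eq_of_forall_ne_le (summable_evalSeries hnorm f hw)
    (C := max (p : ℝ)⁻¹ (‖w‖ ^ (l + 1))) (by positivity) ?_ fun n hn => ?_
  · rw [hlead, pow_succ]
    have hp : (0 : ℝ) < (p : ℝ)⁻¹ := inv_pos.mpr (Nat.cast_pos.mpr (Fact.out : p.Prime).pos)
    exact max_lt hwl (mul_lt_of_lt_one_right (hp.trans hwl) hw)
  · rw [hterm]
    rcases hn.lt_or_gt with hn | hn
    · exact le_max_of_le_left ((mul_le_of_le_one_right (norm_nonneg _)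
        (pow_le_one₀ (norm_nonneg w) hw.le)).trans (PadicInt.norm_le_inv_of_dvd (hlt n hn)))
    · exact le_max_of_le_right
        ((mul_le_of_le_one_left (by positivity) (PadicInt.norm_le_one _)).trans
          (pow_le_pow_of_le_one (norm_nonneg w) hw.le hn))

theorem exists_neg_logb_norm_eq_one_div [IsAlgClosed K]
    (hnorm : ∀ x : ℚ_[p], ‖algebraMap ℚ_[p] K x‖ = ‖x‖) {N : ℕ} (hN : N ≠ 0) :
    ∃ w : K, ‖w‖ < 1 ∧ -logb p ‖w‖ = 1 / N ∧ ∀ l < N, (p : ℝ)⁻¹ < ‖w‖ ^ l := by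
  have hp : (1 : ℝ) < p := by exact_mod_cast (Fact.out : p.Prime).one_lt
  obtain ⟨w, hw⟩ := IsAlgClosed.exists_pow_nat_eq (algebraMap ℚ_[p] K p) (Nat.pos_of_ne_zero hN)
  replace hw : ‖w‖ ^ N = (p : ℝ)⁻¹ := by rw [← norm_pow, hw, hnorm, Padic.norm_p]
  have hw0 : 0 < ‖w‖ := norm_pos_iff.mpr fun h => by simp [h, hN] at hw; linarith
  have hw1 : ‖w‖ < 1 :=
    (pow_lt_one_iff_of_nonneg (norm_nonneg w) hN).mp (hw ▸ inv_lt_one_of_one_lt₀ hp)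
  refine ⟨w, hw1, eq_one_div_of_mul_eq_one_right ?_, fun l hl => ?_⟩
  · rw [mul_neg, ← logb_pow, hw, logb_inv, logb_self_eq_one hp, neg_neg]
  · exact hw ▸ pow_lt_pow_right_of_lt_one₀ hw0 hw1 hl

end Evaluation

theorem Real.one_le_neg_logb_of_le_inv {b x : ℝ} (hb : 1 < b) (hx : 0 < x) (h : x ≤ b⁻¹) :
    1 ≤ -logb b x := by
  have := (logb_le_logb hb hx (by positivity)).mpr h
  rw [logb_inv, logb_self_eq_one hb] at this
  linarith

theorem sub_div_lt_sub_div_of_lt {x₀ x₁ x₂ d₁ d₂ : ℝ} (h₂₁ : x₂ < x₁) (h₀₁ : x₀ < x₁)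
    (hd₁ : 0 < d₁) (hd : d₁ ≤ d₂) : (x₂ - x₀) / d₂ < (x₁ - x₀) / d₁ :=
  calc (x₂ - x₀) / d₂ < (x₁ - x₀) / d₂ := div_lt_div_of_pos_right (by linarith) (by linarith)
    _ ≤ (x₁ - x₀) / d₁ := div_le_div_of_nonneg_left (by linarith) hd₁ hd

theorem mu_zero_at_break_point_general
    (p : ℕ) [Fact p.Prime]
    (K : Type*) [NontriviallyNormedField K] [CompleteSpace K] [IsAlgClosed K]
    [Algebra ℚ_[p] K]
    (hnorm : ∀ x : ℚ_[p], ‖algebraMap ℚ_[p] K x‖ = ‖x‖)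
    (hna : ∀ x y : K, ‖x + y‖ ≤ max ‖x‖ ‖y‖)
    (a : ℕ → PowerSeries ℤ_[p])
    (i₀ i₁ i₂ : ℕ) (h01 : i₀ < i₁) (h12 : i₁ ≤ i₂)
    (hmu0 : ¬ (p : PowerSeries ℤ_[p]) ∣ a i₀)
    (hmu2 : ¬ (p : PowerSeries ℤ_[p]) ∣ a i₂)
    (r' : ℝ) (hr' : 0 < r')
    (hroots : ∀ ℓ ∈ ({i₀, i₁, i₂} : Set ℕ), ∀ z : K, ‖z‖ < 1 →
      (∑' n : ℕ, algebraMap ℚ_[p] K ((PowerSeries.coeff n (a ℓ) : ℤ_[p]) : ℚ_[p]) * z ^ n)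
        = 0 → r' ≤ -Real.logb p ‖z‖)
    (hslope : ∀ w₀ : K, 0 < -Real.logb p ‖w₀‖ → -Real.logb p ‖w₀‖ < r' →
      (-Real.logb p
          ‖∑' n : ℕ, algebraMap ℚ_[p] K ((PowerSeries.coeff n (a i₁) : ℤ_[p]) : ℚ_[p]) * w₀ ^ n‖
        - -Real.logb p
          ‖∑' n : ℕ, algebraMap ℚ_[p] K ((PowerSeries.coeff n (a i₀) : ℤ_[p]) : ℚ_[p]) * w₀ ^ n‖)
        / ((i₁ : ℝ) - (i₀ : ℝ))
      ≤ (-Real.logb p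
          ‖∑' n : ℕ, algebraMap ℚ_[p] K ((PowerSeries.coeff n (a i₂) : ℤ_[p]) : ℚ_[p]) * w₀ ^ n‖
        - -Real.logb p
          ‖∑' n : ℕ, algebraMap ℚ_[p] K ((PowerSeries.coeff n (a i₀) : ℤ_[p]) : ℚ_[p]) * w₀ ^ n‖)
        / ((i₂ : ℝ) - (i₀ : ℝ))) :
    ¬ (p : PowerSeries ℤ_[p]) ∣ a i₁ := by
  have := IsUltrametricDist.isUltrametricDist_of_forall_norm_add_le_max_norm hna
  intro hdvd
  have hp : (1 : ℝ) < p := by exact_mod_cast (Fact.out : p.Prime).one_lt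
  obtain ⟨l₀, hl₀, hlt₀⟩ := exists_coeff_not_dvd_of_not_natCast_dvd hmu0
  obtain ⟨l₂, hl₂, hlt₂⟩ := exists_coeff_not_dvd_of_not_natCast_dvd hmu2
  obtain ⟨N, hNgt⟩ := exists_nat_gt (max (1 / r') (max l₀ l₂))
  obtain ⟨hNr, hl₀N, hl₂N⟩ : 1 / r' < N ∧ (l₀ : ℝ) < N ∧ (l₂ : ℝ) < N := by
    simpa only [max_lt_iff] using hNgt
  have hN0 : (0 : ℝ) < N := (one_div_pos.mpr hr').trans hNr
  have hN : N ≠ 0 := (Nat.cast_pos.mp hN0).ne'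
  obtain ⟨w, hw1, hv, hwl⟩ := exists_neg_logb_norm_eq_one_div (K := K) hnorm hN
  have hvr : -logb p ‖w‖ < r' := by rw [hv]; exact (one_div_lt hr' hN0).mp hNr
  have hval : ∀ {f : ℤ_[p]⟦X⟧} {l : ℕ}, ¬ (p : ℤ_[p]) ∣ coeff l f →
      (∀ n < l, (p : ℤ_[p]) ∣ coeff n f) → (l : ℝ) < N → -logb p ‖evalSeries f w‖ = l / N := by
    intro f l hl hlt hlN
    rw [norm_evalSeries_eq_pow hnorm hl hlt hw1 (hwl l (by exact_mod_cast hlN)), logb_pow,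
      ← mul_neg, hv, mul_one_div]
  have hS₁ : evalSeries (a i₁) w ≠ 0 := fun h => (hroots i₁ (by simp) w hw1 h).not_gt hvr
  have hv₁ : 1 ≤ -logb p ‖evalSeries (a i₁) w‖ := Real.one_le_neg_logb_of_le_inv hp
    (norm_pos_iff.mpr hS₁) (norm_evalSeries_le_of_dvd hnorm hdvd hw1.le)
  have hslope_w := hslope w (by rw [hv]; positivity) hvr
  simp only [← evalSeries.eq_1] at hslope_w
  rw [hval hl₀ hlt₀ hl₀N, hval hl₂ hlt₂ hl₂N] at hslope_w
  exact (sub_div_lt_sub_div_of_lt (((div_lt_one hN0).mpr hl₂N).trans_le hv₁)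
    (((div_lt_one hN0).mpr hl₀N).trans_le hv₁) (sub_pos.mpr (by exact_mod_cast h01))
    (sub_le_sub_right (by exact_mod_cast h12) _)).not_ge hslope_w

/-- Vanishing of the `μ`-invariant at break points.  Let `K` be a complete algebraically
closed nonarchimedean normed field extending `ℚ_p` isometrically (a model of `ℂ_p`), with
valuation `v z = -log_p ‖z‖`.  Let `a_i ∈ ℤ_p[[w]]` with `a 0 = 1`, indices
`i₀ < i₁ ≤ i₂` with `μ(a i₀) = 0` and `μ(a i₂) = 0` (i.e. `p ∤ a i₀`, `p ∤ a i₂`).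
Suppose `r' > 0` is such that all roots of `a i₀`, `a i₁`, `a i₂` in the open unit disc
have valuation at least `r'`, and that for all `w₀` with `0 < v w₀ < r'` the slope
inequality
`(v(a i₁(w₀)) − v(a i₀(w₀)))/(i₁ − i₀) ≤ (v(a i₂(w₀)) − v(a i₀(w₀)))/(i₂ − i₀)`
holds.  Then `μ(a i₁) = 0`, i.e. `p ∤ a i₁`. -/
theorem mu_zero_at_break_point
    (p : ℕ) [Fact p.Prime]
    (K : Type*) [NontriviallyNormedField K] [CompleteSpace K] [IsAlgClosed K]
    [Algebra ℚ_[p] K]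
    (hnorm : ∀ x : ℚ_[p], ‖algebraMap ℚ_[p] K x‖ = ‖x‖)
    (hna : ∀ x y : K, ‖x + y‖ ≤ max ‖x‖ ‖y‖)
    (a : ℕ → PowerSeries ℤ_[p]) (ha0 : a 0 = 1)
    (i₀ i₁ i₂ : ℕ) (h01 : i₀ < i₁) (h12 : i₁ ≤ i₂)
    (hmu0 : ¬ (p : PowerSeries ℤ_[p]) ∣ a i₀)
    (hmu2 : ¬ (p : PowerSeries ℤ_[p]) ∣ a i₂)
    (r' : ℝ) (hr' : 0 < r')
    (hroots : ∀ ℓ ∈ ({i₀, i₁, i₂} : Set ℕ), ∀ z : K, ‖z‖ < 1 →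
      (∑' n : ℕ, algebraMap ℚ_[p] K ((PowerSeries.coeff n (a ℓ) : ℤ_[p]) : ℚ_[p]) * z ^ n)
        = 0 → r' ≤ -Real.logb p ‖z‖)
    (hslope : ∀ w₀ : K, 0 < -Real.logb p ‖w₀‖ → -Real.logb p ‖w₀‖ < r' →
      (-Real.logb p
          ‖∑' n : ℕ, algebraMap ℚ_[p] K ((PowerSeries.coeff n (a i₁) : ℤ_[p]) : ℚ_[p]) * w₀ ^ n‖
        - -Real.logb p
          ‖∑' n : ℕ, algebraMap ℚ_[p] K ((PowerSeries.coeff n (a i₀) : ℤ_[p]) : ℚ_[p]) * w₀ ^ n‖)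
        / ((i₁ : ℝ) - (i₀ : ℝ))
      ≤ (-Real.logb p
          ‖∑' n : ℕ, algebraMap ℚ_[p] K ((PowerSeries.coeff n (a i₂) : ℤ_[p]) : ℚ_[p]) * w₀ ^ n‖
        - -Real.logb p
          ‖∑' n : ℕ, algebraMap ℚ_[p] K ((PowerSeries.coeff n (a i₀) : ℤ_[p]) : ℚ_[p]) * w₀ ^ n‖)
        / ((i₂ : ℝ) - (i₀ : ℝ))) :
    ¬ (p : PowerSeries ℤ_[p]) ∣ a i₁ :=
  mu_zero_at_break_point_general p K hnorm hna a i₀ i₁ i₂ h01 h12 hmu0 hmu2 r' hr' hroots hslope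
end

section
/- Let p be a prime and j ≥ 1. Then s = p^j + 1 is the unique positive integer s coprime to p with s² − 4p^j a perfect square (of a nonnegative integer); in that case s² − 4p^j = (p^j − 1)². -/
/-- For a prime `p` and `j ≥ 1`, `s = p^j + 1` is the unique positive integer `s` coprime
to `p` with `s² − 4p^j` a perfect square of a nonnegative integer; and in that case
`s² − 4p^j = (p^j − 1)²`. -/
theorem unique_s_square_discriminant (p j : ℕ) (hp : p.Prime) (hj : 1 ≤ j)
    (s : ℕ) (hs : 0 < s) (hcop : ¬ p ∣ s) :
    ((∃ t : ℕ, (s : ℤ) ^ 2 - 4 * (p : ℤ) ^ j = (t : ℤ) ^ 2) ↔ s = p ^ j + 1)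
      ∧ ((p : ℤ) ^ j + 1) ^ 2 - 4 * (p : ℤ) ^ j = ((p : ℤ) ^ j - 1) ^ 2 := by
  have hp1 : 1 ≤ p ^ j := Nat.one_le_pow _ _ hp.pos
  have hp2 : 2 ≤ p ^ j := le_trans hp.two_le (Nat.le_self_pow (by omega) p)
  refine ⟨⟨?_, ?_⟩, by ring⟩
  · rintro ⟨t, ht⟩
    have key : s ^ 2 = t ^ 2 + 4 * p ^ j := by
      have : (s : ℤ) ^ 2 = (t : ℤ) ^ 2 + 4 * (p : ℤ) ^ j := by linarith
      exact_mod_cast this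
    have hts : t < s := by
      have h2 : t ^ 2 < s ^ 2 := by omega
      exact lt_of_pow_lt_pow_left₀ 2 (Nat.zero_le s) h2
    obtain ⟨d, hd, rfl⟩ : ∃ d, 0 < d ∧ s = t + d := ⟨s - t, by omega, by omega⟩
    have hde : d * (2 * t + d) = 4 * p ^ j := by
      have expand : (t + d) ^ 2 = t ^ 2 + d * (2 * t + d) := by ring
      omega
    have hdeven : 2 ∣ d := by
      rcases Nat.even_or_odd d with h | h
      · exact h.two_dvd
      · exfalso
        have h1 : Odd (2 * t + d) := by
          rcases h with ⟨k, hk⟩; exact ⟨t + k, by omega⟩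
        have h2 : Odd (d * (2 * t + d)) := h.mul h1
        rw [hde] at h2
        rcases h2 with ⟨k, hk⟩
        omega
    obtain ⟨a, rfl⟩ := hdeven
    have ha : 0 < a := by omega
    have hab : a * (t + a) = p ^ j := by
      have h4 : 2 * a * (2 * t + 2 * a) = 4 * (a * (t + a)) := by ring
      have := hde
      rw [h4] at this
      omega
    have hadvd : a ∣ p ^ j := ⟨t + a, hab.symm⟩
    obtain ⟨i, hij, rfl⟩ := (Nat.dvd_prime_pow hp).mp hadvd
    have hb : t + p ^ i = p ^ (j - i) := by
      have h1 : p ^ i * (t + p ^ i) = p ^ i * p ^ (j - i) := by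
        rw [hab, ← pow_add]
        congr 1
        omega
      exact Nat.eq_of_mul_eq_mul_left (pow_pos hp.pos i) h1
    rcases Nat.eq_zero_or_pos i with rfl | hi
    · simp at hb ⊢
      omega
    rcases eq_or_lt_of_le hij with rfl | hlt
    · simp at hb
      have : 2 ≤ p ^ i := le_trans hp.two_le (Nat.le_self_pow (by omega) p)
      omega
    · exfalso
      apply hcop
      have h1 : p ∣ p ^ i := dvd_pow_self p (by omega)
      have h2 : p ∣ p ^ (j - i) := dvd_pow_self p (by omega)
      have : t + 2 * p ^ i = (t + p ^ i) + p ^ i := by ring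
      rw [this, hb]
      exact dvd_add h2 h1
  · rintro rfl
    refine ⟨p ^ j - 1, ?_⟩
    have hc : ((p ^ j - 1 : ℕ) : ℤ) = (p : ℤ) ^ j - 1 := by
      push_cast [hp1]
      ring
    rw [hc]
    push_cast
    ring
end
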